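/- arXiv:1603.09141 — 4 statements merged into one kernel-verified Lean document; each statement's English description precedes it below -/
import Mathlib

section
/- Suppose A_k = X1 Π D_k X2ᵀ for k = 1,...,κ, where X1, X2 have full column rank r, Π is diagonal invertible with positive diagonal, and each D_k is r×r diagonal. Let W1, W2 satisfy W1 X1 Π X2ᵀ W2ᵀ = I_r, and set Q = W1 X1 Π^{1/2}. Then W1 A_k W2ᵀ = Q D_k Q^{-1} for every k; that is, the matrices W1 A_k W2ᵀ are simultaneously diagonalized by the single invertible matrix Q. -/
open Matrix

/-! Writing `Π = S²` with `S = Π^{1/2}`, the whitening identity `W1 X1 Π X2ᵀ W2ᵀ = 1` says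
that `Q = W1 X1 S` has the right inverse `S X2ᵀ W2ᵀ`, and since diagonal matrices commute,
`W1 A_k W2ᵀ` factors as `(W1 X1 S) D_k (S X2ᵀ W2ᵀ) = Q D_k Q⁻¹`. -/

namespace Matrix

variable {R : Type*} [CommRing R] {n : Type*} [Fintype n] [DecidableEq n]

theorem diagonal_mul_self_mul_diagonal (s d : n → R) :
    diagonal (fun i => s i * s i) * diagonal d = diagonal s * diagonal d * diagonal s := by
  simp only [diagonal_mul_diagonal, mul_right_comm]

variable {P N : Matrix n n R} {s : n → R}

theorem mul_diagonal_mul_diagonal_mul_eq_one (h : P * diagonal (fun i => s i * s i) * N = 1) :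
    P * diagonal s * (diagonal s * N) = 1 := by
  rw [← h, ← diagonal_mul_diagonal]
  simp only [Matrix.mul_assoc]

theorem isUnit_mul_diagonal_of_mul_diagonal_mul_self_mul_eq_one
    (h : P * diagonal (fun i => s i * s i) * N = 1) : IsUnit (P * diagonal s) :=
  (isUnit_iff_isUnit_det _).mpr
    (isUnit_det_of_right_inverse (mul_diagonal_mul_diagonal_mul_eq_one h))

theorem mul_diagonal_mul_self_mul_diagonal_mul_eq_conj
    (h : P * diagonal (fun i => s i * s i) * N = 1) (d : n → R) :
    P * diagonal (fun i => s i * s i) * diagonal d * N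
      = P * diagonal s * diagonal d * (P * diagonal s)⁻¹ := by
  rw [inv_eq_right_inv (mul_diagonal_mul_diagonal_mul_eq_one h), Matrix.mul_assoc P,
    diagonal_mul_self_mul_diagonal]
  simp only [Matrix.mul_assoc]

end Matrix

theorem joint_diagonalization_general
    {κ1 κ2 r κ : ℕ}
    (X1 : Matrix (Fin κ1) (Fin r) ℝ) (X2 : Matrix (Fin κ2) (Fin r) ℝ)
    (π : Fin r → ℝ) (hπ : ∀ j, 0 < π j)
    (d : Fin κ → Fin r → ℝ)
    (A : Fin κ → Matrix (Fin κ1) (Fin κ2) ℝ)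
    (hA : ∀ k, A k = X1 * Matrix.diagonal π * Matrix.diagonal (d k) * X2ᵀ)
    (W1 : Matrix (Fin r) (Fin κ1) ℝ) (W2 : Matrix (Fin r) (Fin κ2) ℝ)
    (hW : W1 * (X1 * Matrix.diagonal π * X2ᵀ) * W2ᵀ = 1)
    (Q : Matrix (Fin r) (Fin r) ℝ)
    (hQ : Q = W1 * X1 * Matrix.diagonal (fun j => Real.sqrt (π j))) :
    IsUnit Q ∧ ∀ k, W1 * A k * W2ᵀ = Q * Matrix.diagonal (d k) * Q⁻¹ := by
  have hπ_sq : π = fun j => √(π j) * √(π j) :=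
    funext fun j => (Real.mul_self_sqrt (hπ j).le).symm
  rw [hπ_sq] at hA hW
  have hwhite : W1 * X1 * diagonal (fun j => √(π j) * √(π j)) * (X2ᵀ * W2ᵀ) = 1 := by
    simpa only [Matrix.mul_assoc] using hW
  subst hQ
  refine ⟨isUnit_mul_diagonal_of_mul_diagonal_mul_self_mul_eq_one hwhite, fun k => ?_⟩
  rw [hA k, ← mul_diagonal_mul_self_mul_diagonal_mul_eq_conj hwhite]
  simp only [Matrix.mul_assoc]

/-- If `A_k = X1 Π D_k X2ᵀ` and `W1 (X1 Π X2ᵀ) W2ᵀ = I_r`, then with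
`Q = W1 X1 Π^{1/2}` invertible we have `W1 A_k W2ᵀ = Q D_k Q⁻¹` for every `k`. -/
theorem joint_diagonalization
    {κ1 κ2 r κ : ℕ}
    (X1 : Matrix (Fin κ1) (Fin r) ℝ) (X2 : Matrix (Fin κ2) (Fin r) ℝ)
    (π : Fin r → ℝ) (hπ : ∀ j, 0 < π j)
    (hX1 : X1.rank = r) (hX2 : X2.rank = r)
    (d : Fin κ → Fin r → ℝ)
    (A : Fin κ → Matrix (Fin κ1) (Fin κ2) ℝ)
    (hA : ∀ k, A k = X1 * Matrix.diagonal π * Matrix.diagonal (d k) * X2ᵀ)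
    (W1 : Matrix (Fin r) (Fin κ1) ℝ) (W2 : Matrix (Fin r) (Fin κ2) ℝ)
    (hW : W1 * (X1 * Matrix.diagonal π * X2ᵀ) * W2ᵀ = 1)
    (Q : Matrix (Fin r) (Fin r) ℝ)
    (hQ : Q = W1 * X1 * Matrix.diagonal (fun j => Real.sqrt (π j))) :
    IsUnit Q ∧ ∀ k, W1 * A k * W2ᵀ = Q * Matrix.diagonal (d k) * Q⁻¹ :=
  joint_diagonalization_general X1 X2 π hπ d A hA W1 W2 hW Q hQ
end

section
/- Let Q and Q̃ be invertible r×r real matrices and D_1,...,D_κ and D̃_1,...,D̃_κ be r×r diagonal matrices such that Q D_k Q^{-1} = Q̃ D̃_k Q̃^{-1} for all k = 1,...,κ. Suppose that for every pair of distinct indices j1 ≠ j2 in {1,...,r} there exists some k with D_k(j1,j1) ≠ D_k(j2,j2) (i.e., the columns of the r×κ matrix of eigenvalues are pairwise distinct). Then there exist a permutation matrix Δ and an invertible diagonal matrix Λ such that Q̃ = Q Δ Λ, and consequently D̃_k = Δᵀ D_k Δ for all k. -/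
open Matrix

/-!
Put `M = Q⁻¹ Q̃`. The hypothesis says `D_k M = M D̃_k`, i.e. `(d_k i - d̃_k j) M i j = 0`, so a
nonzero entry `M i j` forces the eigenvalue vector of row `i` (for `D`) to equal that of column `j`
(for `D̃`). As the eigenvalue vectors of `D` are pairwise distinct, each column of `M` has at most
one nonzero entry. Since `det M ≠ 0`, some term `∏ M (σ j) j` of the Leibniz expansion is nonzero,
so the nonzero entries of `M` lie exactly on the graph of a permutation `σ`: `M` is a permutation
matrix times an invertible diagonal matrix, and `d̃_k = d_k ∘ σ`.
-/

namespace Matrix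

variable {n R : Type*} [Fintype n] [DecidableEq n] [CommRing R]

theorem mul_inv_mul_eq_mul_mul_of_conj_eq {A B P P' : Matrix n n R} (hP : IsUnit P)
    (hP' : IsUnit P') (h : P * A * P⁻¹ = P' * B * P'⁻¹) : A * (P⁻¹ * P') = P⁻¹ * P' * B := by
  rw [isUnit_iff_isUnit_det] at hP hP'
  calc A * (P⁻¹ * P') = P⁻¹ * (P * A * P⁻¹) * P' := by
        simp only [mul_assoc, nonsing_inv_mul_cancel_left _ _ hP]
    _ = P⁻¹ * (P' * B * P'⁻¹) * P' := by rw [h]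
    _ = P⁻¹ * P' * B := by simp only [mul_assoc, nonsing_inv_mul_cancel_right _ _ hP']

theorem apply_eq_of_diagonal_mul_eq_mul_diagonal [NoZeroDivisors R] {a b : n → R}
    {M : Matrix n n R} (h : diagonal a * M = M * diagonal b) {i j : n} (hij : M i j ≠ 0) :
    a i = b j := by
  have hij' := congrFun (congrFun h i) j
  rw [diagonal_mul, mul_diagonal, mul_comm] at hij'
  exact mul_left_cancel₀ hij hij'

theorem eq_of_diagonal_mul_eq_mul_diagonal_of_apply_ne_zero [NoZeroDivisors R] {ι : Type*}
    {a b : ι → n → R} {M : Matrix n n R} (h : ∀ k, diagonal (a k) * M = M * diagonal (b k))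
    (ha : ∀ i i', i ≠ i' → ∃ k, a k i ≠ a k i') {i i' j : n} (hi : M i j ≠ 0)
    (hi' : M i' j ≠ 0) : i = i' := by
  by_contra hne
  obtain ⟨k, hk⟩ := ha i i' hne
  exact hk ((apply_eq_of_diagonal_mul_eq_mul_diagonal (h k) hi).trans
    (apply_eq_of_diagonal_mul_eq_mul_diagonal (h k) hi').symm)

theorem exists_perm_forall_apply_ne_zero_of_det_ne_zero {M : Matrix n n R} (h : M.det ≠ 0) :
    ∃ σ : Equiv.Perm n, ∀ j, M (σ j) j ≠ 0 := by
  rw [det_apply] at h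
  obtain ⟨σ, -, hσ⟩ := Finset.exists_ne_zero_of_sum_ne_zero h
  exact ⟨σ, fun j hj => hσ (smul_eq_zero_of_right _ (Finset.prod_eq_zero (Finset.mem_univ j) hj))⟩

theorem eq_permMatrix_mul_diagonal {M : Matrix n n R} {σ : Equiv.Perm n}
    (h : ∀ i j, M i j ≠ 0 → i = σ j) :
    M = σ⁻¹.permMatrix R * diagonal fun j => M (σ j) j := by
  ext i j
  simp only [mul_diagonal, PEquiv.toMatrix_apply, Equiv.toPEquiv_apply, Option.mem_some_iff,
    Equiv.Perm.inv_eq_iff_eq]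
  split_ifs with hij
  · rw [one_mul, hij]
  · rw [zero_mul]
    exact not_imp_comm.mp (h i j) hij

theorem transpose_permMatrix_mul_diagonal_mul_permMatrix (σ : Equiv.Perm n) (d : n → R) :
    (σ.permMatrix R)ᵀ * diagonal d * σ.permMatrix R = diagonal fun i => d (σ⁻¹ i) := by
  rw [transpose_permMatrix, PEquiv.toMatrix_toPEquiv_mul, PEquiv.mul_toMatrix_toPEquiv,
    submatrix_submatrix]
  exact submatrix_diagonal_equiv d σ⁻¹

end Matrix

/-- Uniqueness of simultaneous nonorthogonal diagonalization: if
`Q D_k Q⁻¹ = Q̃ D̃_k Q̃⁻¹` for all `k` and the eigenvalue vectors (columns of the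
matrix of eigenvalues) are pairwise distinct, then `Q̃ = Q Δ Λ` for a permutation
matrix `Δ` and invertible diagonal `Λ`, and `D̃_k = Δᵀ D_k Δ`. -/
theorem simultaneous_diagonalization_unique
    {r κ : ℕ}
    (Q Qt : Matrix (Fin r) (Fin r) ℝ)
    (hQ : IsUnit Q) (hQt : IsUnit Qt)
    (d dt : Fin κ → Fin r → ℝ)
    (heq : ∀ k, Q * Matrix.diagonal (d k) * Q⁻¹ = Qt * Matrix.diagonal (dt k) * Qt⁻¹)
    (hdist : ∀ j1 j2 : Fin r, j1 ≠ j2 → ∃ k, d k j1 ≠ d k j2) :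
    ∃ (σ : Equiv.Perm (Fin r)) (lam : Fin r → ℝ),
      (∀ j, lam j ≠ 0) ∧
      Qt = Q * σ.permMatrix ℝ * Matrix.diagonal lam ∧
      ∀ k, Matrix.diagonal (dt k) = (σ.permMatrix ℝ)ᵀ * Matrix.diagonal (d k) * σ.permMatrix ℝ := by
  set M := Q⁻¹ * Qt with hM
  have hcomm (k : Fin κ) : diagonal (d k) * M = M * diagonal (dt k) :=
    mul_inv_mul_eq_mul_mul_of_conj_eq hQ hQt (heq k)
  have hdet : M.det ≠ 0 := (((isUnit_nonsing_inv_iff.mpr hQ).mul hQt).map detMonoidHom).ne_zero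
  obtain ⟨σ, hσ⟩ := exists_perm_forall_apply_ne_zero_of_det_ne_zero hdet
  have hgraph (i j : Fin r) (hij : M i j ≠ 0) : i = σ j :=
    eq_of_diagonal_mul_eq_mul_diagonal_of_apply_ne_zero hcomm hdist hij (hσ j)
  refine ⟨σ⁻¹, fun j => M (σ j) j, hσ, ?_, fun k => ?_⟩
  · rw [mul_assoc, ← eq_permMatrix_mul_diagonal hgraph, hM,
      mul_nonsing_inv_cancel_left _ _ ((isUnit_iff_isUnit_det Q).mp hQ)]
  · rw [transpose_permMatrix_mul_diagonal_mul_permMatrix, inv_inv]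
    congr 1
    ext j
    exact (apply_eq_of_diagonal_mul_eq_mul_diagonal (hcomm k) (hσ j)).symm
end

section
/- Let {Z_i} be a stationary Markov chain on {1,...,r} with transition matrix K and stationary distribution π (so πᵀK = πᵀ), and let Y_i be conditionally independent given the chain with the distribution of Y_i depending only on Z_i, P(Y_i = y | Z_i = j) = p_j(y) for y in a finite set of size κ. Let P be the κ×r matrix with columns p_j and Π = diag(π). Then the three-way contingency table of (Y_1, Y_2, Y_3) satisfies ℙ(a,b,c) = Σ_{j=1}^r π_j a_j(a) p_j(b) b_j(c), where the vectors b_j are the columns of B = P Kᵀ and the vectors a_j are the columns of A = P Π K Π^{-1}. -/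
/-!
Sum over the middle state `j = Z₂`. The sum over `Z₃` is `(P Kᵀ)_{c j}`, and the sum over `Z₁`
is `(P Π K)_{a j}`, which equals `π_j (P Π K Π⁻¹)_{a j}` because `π_j ≠ 0`.
-/

open Matrix

theorem Matrix.sum_three_step_path_eq_sum_mul_apply {ι α R : Type*} [Fintype ι] [DecidableEq ι]
    [CommSemiring R]
    (π : ι → R) (K : Matrix ι ι R) (p : ι → α → R) (a b c : α) :
    ∑ j1, ∑ j2, ∑ j3, π j1 * K j1 j2 * K j2 j3 * p j1 a * p j2 b * p j3 c =
      ∑ j, (of (fun y j => p j y) * diagonal π * K) a j * p j b *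
        (of (fun y j => p j y) * Kᵀ) c j := by
  have forward (j : ι) :
      (of (fun y j => p j y) * diagonal π * K) a j = ∑ j1, p j1 a * π j1 * K j1 j := by
    rw [mul_apply]
    simp only [mul_diagonal, of_apply]
  have backward (j : ι) : (of (fun y j => p j y) * Kᵀ) c j = ∑ j3, p j3 c * K j j3 := by
    simp only [mul_apply, of_apply, transpose_apply]
  simp only [forward, backward, Finset.sum_mul, Finset.mul_sum]
  conv_lhs => rw [Finset.sum_comm]
  refine Finset.sum_congr rfl fun j _ => ?_
  rw [Finset.sum_comm]
  refine Finset.sum_congr rfl fun j3 _ => Finset.sum_congr rfl fun j1 _ => ?_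
  ring

theorem Matrix.mul_mul_diagonal_inv_apply {m ι K : Type*} [Fintype ι] [DecidableEq ι] [Field K]
    (π : ι → K) (M : Matrix m ι K) (a : m) {j : ι} (hj : π j ≠ 0) :
    π j * (M * diagonal fun i => (π i)⁻¹) a j = M a j := by
  rw [mul_diagonal, mul_left_comm, mul_inv_cancel₀ hj, mul_one]

theorem hmm_triad_decomposition_general
    {r κ : ℕ}
    (π : Fin r → ℝ) (K : Matrix (Fin r) (Fin r) ℝ)
    (p : Fin r → Fin κ → ℝ)
    (hπpos : ∀ j, 0 < π j)
    (P : Matrix (Fin κ) (Fin r) ℝ) (hP : P = Matrix.of fun y j => p j y)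
    (A : Matrix (Fin κ) (Fin r) ℝ)
    (hA : A = P * Matrix.diagonal π * K * Matrix.diagonal (fun j => (π j)⁻¹))
    (B : Matrix (Fin κ) (Fin r) ℝ) (hB : B = P * Kᵀ)
    (table : Fin κ → Fin κ → Fin κ → ℝ)
    (htable : ∀ a b c, table a b c =
      ∑ j1, ∑ j2, ∑ j3, π j1 * K j1 j2 * K j2 j3 * p j1 a * p j2 b * p j3 c) :
    ∀ a b c, table a b c = ∑ j, π j * A a j * p j b * B c j := by
  intro a b c
  subst hP hA hB
  rw [htable, sum_three_step_path_eq_sum_mul_apply]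
  refine Finset.sum_congr rfl fun j _ => ?_
  rw [mul_mul_diagonal_inv_apply π _ a (hπpos j).ne']

/-- Hidden Markov model with `r` states, transition matrix `K`,
stationary distribution `π` and emission pmfs `p_j`. The joint pmf of
`(Z1,Z2,Z3,Y1,Y2,Y3)` is `π_{j1} K(j1,j2) K(j2,j3) p_{j1}(a) p_{j2}(b) p_{j3}(c)`.
Then the contingency table of `(Y1,Y2,Y3)` factors as
`ℙ(a,b,c) = Σ_j π_j a_j(a) p_j(b) b_j(c)` where the `a_j` are the columns of
`A = P Π K Π⁻¹` and the `b_j` are the columns of `B = P Kᵀ`. -/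
theorem hmm_triad_decomposition
    {r κ : ℕ}
    (π : Fin r → ℝ) (K : Matrix (Fin r) (Fin r) ℝ)
    (p : Fin r → Fin κ → ℝ)
    (hπpos : ∀ j, 0 < π j)
    (hstat : ∀ j2, ∑ j1, π j1 * K j1 j2 = π j2)
    (P : Matrix (Fin κ) (Fin r) ℝ) (hP : P = Matrix.of fun y j => p j y)
    (A : Matrix (Fin κ) (Fin r) ℝ)
    (hA : A = P * Matrix.diagonal π * K * Matrix.diagonal (fun j => (π j)⁻¹))
    (B : Matrix (Fin κ) (Fin r) ℝ) (hB : B = P * Kᵀ)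
    (table : Fin κ → Fin κ → Fin κ → ℝ)
    (htable : ∀ a b c, table a b c =
      ∑ j1, ∑ j2, ∑ j3, π j1 * K j1 j2 * K j2 j3 * p j1 a * p j2 b * p j3 c) :
    ∀ a b c, table a b c = ∑ j, π j * A a j * p j b * B c j :=
  hmm_triad_decomposition_general π K p hπpos P hP A hA B hB table htable
end

section
/- Let A_0 = X1 Π X2ᵀ with X1 ∈ ℝ^{κ1×r}, X2 ∈ ℝ^{κ2×r} of full column rank and Π = diag(π) with all π_j ≠ 0, and suppose the matrices X1, X2 and the diagonal entries x_{3j}(k) of the slices A_k = X1 Π diag_k(X3) X2ᵀ are such that the columns of X3 ∈ ℝ^{κ3×r} are pairwise distinct. Then the columns of X3 are identified up to a permutation from the data (A_0, A_1, ..., A_{κ3}): any two families (X1, X2, X3, π) and (X̃1, X̃2, X̃3, π̃) generating the same A_0 and slices, with both satisfying the rank and distinct-columns conditions, have X̃3 = X3 Δ for some permutation matrix Δ. -/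
/-!
Multiplying the data by left inverses of `X1` and `X2` strips off the outer factors: with
`B = L1 X̃1 Π̃` and `C = (L2 X̃2)ᵀ` one gets `B C = Π` and `Π diag_k(X3) = B diag_k(X̃3) C`.
Since `Π` is invertible and commutes with `diag_k(X3)`, cancelling `C` gives the simultaneous
intertwining `diag_k(X3) B = B diag_k(X̃3)` for all `k`. Entrywise this says
`X3(k, i) B(i, j) = B(i, j) X̃3(k, j)`, so choosing in every column `j` of the invertible `B` a
nonzero entry `B(τ j, j)` shows that column `j` of `X̃3` is column `τ j` of `X3`. Distinct
columns of `X̃3` make `τ` injective, hence a permutation.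
-/

open Matrix

namespace Matrix

variable {K m n : Type*} [Fintype n] [DecidableEq n]

theorem exists_mul_eq_one_of_rank_eq_card [Field K] [Fintype m] {X : Matrix m n K}
    (h : X.rank = Fintype.card n) : ∃ L : Matrix n m K, L * X = 1 := by
  have hker : LinearMap.ker X.mulVecLin = ⊥ := by
    have := LinearMap.finrank_range_add_finrank_ker X.mulVecLin
    rw [← rank, h, Module.finrank_fintype_fun_eq_card] at this
    exact Submodule.finrank_eq_zero.mp (by omega)
  obtain ⟨g, hg⟩ := X.mulVecLin.exists_leftInverse_of_injective hker
  classical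
  refine ⟨LinearMap.toMatrix' g, ?_⟩
  rw [← LinearMap.toMatrix'_toLin' X, ← LinearMap.toMatrix'_comp, Matrix.toLin'_apply', hg,
    LinearMap.toMatrix'_id]

theorem eq_mul_mul_transpose_of_mul_mul_transpose_eq {l p q : Type*} [CommSemiring K]
    [Fintype m] [Fintype l] [Fintype p] [Fintype q]
    {X₁ : Matrix m n K} {X₂ : Matrix l n K} {Y₁ : Matrix m p K} {Y₂ : Matrix l q K}
    {L₁ : Matrix n m K} {L₂ : Matrix n l K} {M : Matrix n n K} {N : Matrix p q K}
    (hL₁ : L₁ * X₁ = 1) (hL₂ : L₂ * X₂ = 1) (h : X₁ * M * X₂ᵀ = Y₁ * N * Y₂ᵀ) :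
    M = L₁ * Y₁ * N * (L₂ * Y₂)ᵀ := by
  have hR₂ : X₂ᵀ * L₂ᵀ = 1 := by rw [← transpose_mul, hL₂, transpose_one]
  calc M = L₁ * X₁ * M * (X₂ᵀ * L₂ᵀ) := by rw [hL₁, hR₂, Matrix.one_mul, Matrix.mul_one]
    _ = L₁ * (X₁ * M * X₂ᵀ) * L₂ᵀ := by simp only [Matrix.mul_assoc]
    _ = L₁ * Y₁ * N * (L₂ * Y₂)ᵀ := by rw [h, transpose_mul]; simp only [Matrix.mul_assoc]

theorem exists_eq_comp_of_diagonal_mul_eq_mul_diagonal {ι : Type*} [CommRing K] [IsDomain K]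
    {B : Matrix n n K} (hB : B.det ≠ 0) {d e : ι → n → K}
    (h : ∀ k, diagonal (d k) * B = B * diagonal (e k)) :
    ∃ τ : n → n, ∀ k j, e k j = d k (τ j) := by
  have hcol : ∀ j, ∃ i, B i j ≠ 0 := by
    intro j
    by_contra! hzero
    exact hB (det_eq_zero_of_column_eq_zero j hzero)
  choose τ hτ using hcol
  refine ⟨τ, fun k j => mul_left_cancel₀ (hτ j) ?_⟩
  have hkj := congrFun (congrFun (h k) (τ j)) j
  rw [diagonal_mul, mul_diagonal] at hkj
  rw [← hkj, mul_comm]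

theorem exists_perm_eq_mul_permMatrix [Semiring K] {X Y : Matrix m n K}
    (hY : Function.Injective Yᵀ) {τ : n → n} (h : ∀ k j, Y k j = X k (τ j)) :
    ∃ σ : Equiv.Perm n, Y = X * σ.permMatrix K := by
  have hτ : Function.Injective τ := fun j₁ j₂ hj =>
    hY (funext fun k => by simp only [transpose_apply, h, hj])
  refine ⟨(Equiv.ofBijective τ hτ.bijective_of_finite).symm, ?_⟩
  rw [Equiv.Perm.permMatrix, PEquiv.mul_toMatrix_toPEquiv, Equiv.symm_symm]
  ext k j
  exact h k j

end Matrix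

theorem mul_eq_mul_of_mul_eq_mul_mul {M : Type*} [Monoid M] {A B C X Y : M} (hC : IsUnit C)
    (hBC : B * C = A) (hXA : Commute X A) (h : A * X = B * Y * C) : X * B = B * Y :=
  hC.mul_left_injective <| show X * B * C = B * Y * C by rw [mul_assoc, hBC, hXA.eq, h]

theorem identification_of_X3_up_to_permutation_general
    {κ1 κ2 κ3 r : ℕ}
    (X1 Xt1 : Matrix (Fin κ1) (Fin r) ℝ)
    (X2 Xt2 : Matrix (Fin κ2) (Fin r) ℝ)
    (X3 Xt3 : Matrix (Fin κ3) (Fin r) ℝ)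
    (π πt : Fin r → ℝ)
    (hX1 : X1.rank = r) (hX2 : X2.rank = r)
    (hπ : ∀ j, π j ≠ 0)
    (hcolt : ∀ j1 j2 : Fin r, j1 ≠ j2 → ∃ k, Xt3 k j1 ≠ Xt3 k j2)
    (hA0 : X1 * Matrix.diagonal π * X2ᵀ = Xt1 * Matrix.diagonal πt * Xt2ᵀ)
    (hAk : ∀ k : Fin κ3,
      X1 * Matrix.diagonal π * Matrix.diagonal (fun j => X3 k j) * X2ᵀ
        = Xt1 * Matrix.diagonal πt * Matrix.diagonal (fun j => Xt3 k j) * Xt2ᵀ) :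
    ∃ σ : Equiv.Perm (Fin r), Xt3 = X3 * σ.permMatrix ℝ := by
  obtain ⟨L1, hL1⟩ := exists_mul_eq_one_of_rank_eq_card (hX1.trans (Fintype.card_fin r).symm)
  obtain ⟨L2, hL2⟩ := exists_mul_eq_one_of_rank_eq_card (hX2.trans (Fintype.card_fin r).symm)
  set B := L1 * Xt1 * diagonal πt
  set C := (L2 * Xt2)ᵀ
  have hBC : B * C = diagonal π :=
    (eq_mul_mul_transpose_of_mul_mul_transpose_eq hL1 hL2 hA0).symm
  have hslice : ∀ k, diagonal π * diagonal (X3 k) = B * diagonal (Xt3 k) * C := fun k => by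
    have hk := hAk k
    rw [Matrix.mul_assoc X1, Matrix.mul_assoc Xt1] at hk
    rw [eq_mul_mul_transpose_of_mul_mul_transpose_eq hL1 hL2 hk]
    simp only [B, C, Matrix.mul_assoc]
  have hdet : B.det * C.det ≠ 0 := by
    rw [← det_mul, hBC, det_diagonal]
    exact Finset.prod_ne_zero_iff.mpr fun j _ => hπ j
  have hC : IsUnit C := (isUnit_iff_isUnit_det C).mpr (right_ne_zero_of_mul hdet).isUnit
  have hintertwine : ∀ k, diagonal (X3 k) * B = B * diagonal (Xt3 k) := fun k =>
    mul_eq_mul_of_mul_eq_mul_mul hC hBC (commute_diagonal _ _) (hslice k)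
  obtain ⟨τ, hτ⟩ := exists_eq_comp_of_diagonal_mul_eq_mul_diagonal (left_ne_zero_of_mul hdet)
    hintertwine
  have hcolumns : Function.Injective Xt3ᵀ := fun j1 j2 hj => by
    by_contra hne
    obtain ⟨k, hk⟩ := hcolt j1 j2 hne
    exact hk (congrFun hj k)
  exact exists_perm_eq_mul_permMatrix hcolumns hτ

/-- Identification of the third factor up to a column permutation.
If two families `(X1, X2, X3, π)` and `(X̃1, X̃2, X̃3, π̃)` — each with `X1, X2` of full
column rank, nonzero weights, and pairwise-distinct columns of `X3` — generate the same
two-dimensional submodel `A_0 = X1 Π X2ᵀ` and the same slices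
`A_k = X1 Π diag_k(X3) X2ᵀ`, then `X̃3 = X3 Δ` for some permutation matrix `Δ`. -/
theorem identification_of_X3_up_to_permutation
    {κ1 κ2 κ3 r : ℕ}
    (X1 Xt1 : Matrix (Fin κ1) (Fin r) ℝ)
    (X2 Xt2 : Matrix (Fin κ2) (Fin r) ℝ)
    (X3 Xt3 : Matrix (Fin κ3) (Fin r) ℝ)
    (π πt : Fin r → ℝ)
    (hX1 : X1.rank = r) (hX2 : X2.rank = r)
    (hXt1 : Xt1.rank = r) (hXt2 : Xt2.rank = r)
    (hπ : ∀ j, π j ≠ 0) (hπt : ∀ j, πt j ≠ 0)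
    (hcol : ∀ j1 j2 : Fin r, j1 ≠ j2 → ∃ k, X3 k j1 ≠ X3 k j2)
    (hcolt : ∀ j1 j2 : Fin r, j1 ≠ j2 → ∃ k, Xt3 k j1 ≠ Xt3 k j2)
    (hA0 : X1 * Matrix.diagonal π * X2ᵀ = Xt1 * Matrix.diagonal πt * Xt2ᵀ)
    (hAk : ∀ k : Fin κ3,
      X1 * Matrix.diagonal π * Matrix.diagonal (fun j => X3 k j) * X2ᵀ
        = Xt1 * Matrix.diagonal πt * Matrix.diagonal (fun j => Xt3 k j) * Xt2ᵀ) :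
    ∃ σ : Equiv.Perm (Fin r), Xt3 = X3 * σ.permMatrix ℝ :=
  identification_of_X3_up_to_permutation_general X1 Xt1 X2 Xt2 X3 Xt3 π πt hX1 hX2 hπ hcolt hA0 hAk
end
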